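/- Let α = (a₀,a₁,a₂,b₀,b₁,b₂) ∈ ℂ⁶ satisfy a₀ ≠ 0, a₁ ≠ 0, b₀ ≠ 0, b₁ ≠ 0 and a₁²·b₀³ = a₀²·b₁³. Then there exist A ∈ SL(4,ℂ) with A not a scalar matrix and A² a scalar matrix, and d ∈ ℂ with G_α∘A = d·G_α. (Every point of the quintic hypersurface a₁²b₀³ = a₀²b₁³ in the Luna slice with these coordinates nonzero parameterizes a cubic surface with an extra automorphism of order 2; this divisor is a component of the restriction of the Eckardt divisor to the Luna slice.) -/

import Mathlib

/-!
For `s = a₀b₁/(a₁b₀)` the substitution `x₀ ↦ x₁/s, x₁ ↦ s·x₀` is an involution, and it fixes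
`G_α` exactly when `a₁s³ = a₀` and `b₁s² = b₀`, which is what the quintic relation provides.
Its determinant is `-1`, so rescaling it by a fourth root `ν` of `-1` lands in `SL(4,ℂ)`, keeps
its square scalar, and, `G_α` being a cubic form, multiplies `G_α` by `ν³`.
-/

open MvPolynomial

/-- The substitution action: (P∘A)(x) = P(A·x), i.e. xⱼ ↦ Σₖ Aⱼₖ·xₖ. -/
noncomputable def actM (A : Matrix (Fin 4) (Fin 4) ℂ) (P : MvPolynomial (Fin 4) ℂ) :
    MvPolynomial (Fin 4) ℂ :=
  MvPolynomial.aeval (fun j => ∑ k : Fin 4, MvPolynomial.C (A j k) * MvPolynomial.X k) P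

/-- The family of cubic forms parameterizing the Luna slice at the 3A₂ cubic:
G_α = a₀x₀³ + a₁x₁³ + a₂x₂³ + b₀x₀²x₃ + b₁x₁²x₃ + b₂x₂²x₃ + x₀x₁x₂ + x₃³. -/
noncomputable def lunaFamily (a b : Fin 3 → ℂ) : MvPolynomial (Fin 4) ℂ :=
  C (a 0) * X 0 ^ 3 + C (a 1) * X 1 ^ 3 + C (a 2) * X 2 ^ 3 +
  C (b 0) * X 0 ^ 2 * X 3 + C (b 1) * X 1 ^ 2 * X 3 + C (b 2) * X 2 ^ 2 * X 3 +
  X 0 * X 1 * X 2 + X 3 ^ 3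

@[simp] lemma ofM_eq (M : Matrix (Fin 4) (Fin 4) ℂ) : Matrix.of M = M := rfl

theorem MvPolynomial.IsHomogeneous.aeval_mul_left {σ R S : Type*} [CommSemiring R]
    [CommSemiring S] [Algebra R S] {φ : MvPolynomial σ R} {n : ℕ} (hφ : φ.IsHomogeneous n)
    (c : S) (g : σ → S) :
    MvPolynomial.aeval (fun i => c * g i) φ = c ^ n * MvPolynomial.aeval g φ := by
  conv_lhs => rw [φ.as_sum]
  conv_rhs => rw [φ.as_sum]
  simp only [map_sum, Finset.mul_sum, aeval_monomial]
  refine Finset.sum_congr rfl fun d hd => ?_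
  have hdeg : d.degree = n := by
    rw [Finsupp.degree_eq_weight_one]
    exact hφ (mem_support_iff.mp hd)
  rw [Finsupp.degree_apply] at hdeg
  simp only [mul_pow, Finsupp.prod_mul]
  rw [Finsupp.prod, Finset.prod_pow_eq_pow_sum, hdeg]
  ring

theorem actM_smul {P : MvPolynomial (Fin 4) ℂ} {n : ℕ} (hP : P.IsHomogeneous n) (c : ℂ)
    (A : Matrix (Fin 4) (Fin 4) ℂ) : actM (c • A) P = c ^ n • actM A P := by
  have hsubst : (fun j => ∑ k : Fin 4, C ((c • A) j k) * X k) =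
      fun j => C c * ∑ k : Fin 4, C (A j k) * (X k : MvPolynomial (Fin 4) ℂ) := by
    funext j
    simp only [Matrix.smul_apply, smul_eq_mul, map_mul, Finset.mul_sum, mul_assoc]
  rw [actM, actM, hsubst, hP.aeval_mul_left, ← map_pow, smul_eq_C_mul]

theorem lunaFamily_isHomogeneous (a b : Fin 3 → ℂ) : (lunaFamily a b).IsHomogeneous 3 := by
  have hX (i : Fin 4) : (X i : MvPolynomial (Fin 4) ℂ).IsHomogeneous 1 := isHomogeneous_X ℂ i
  have hcube (c : ℂ) (i : Fin 4) : (C c * X i ^ 3 : MvPolynomial (Fin 4) ℂ).IsHomogeneous 3 :=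
    isHomogeneous_C_mul_X_pow c i 3
  have hsq (c : ℂ) (i : Fin 4) : (C c * X i ^ 2 * X 3 : MvPolynomial (Fin 4) ℂ).IsHomogeneous 3 :=
    (isHomogeneous_C_mul_X_pow c i 2).mul (hX 3)
  have hprod : (X 0 * X 1 * X 2 : MvPolynomial (Fin 4) ℂ).IsHomogeneous 3 :=
    ((hX 0).mul (hX 1)).mul (hX 2)
  exact (((((((hcube _ 0).add (hcube _ 1)).add (hcube _ 2)).add (hsq _ 0)).add (hsq _ 1)).add
    (hsq _ 2)).add hprod).add (isHomogeneous_X_pow 3 3)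

noncomputable def swapMatrix (s : ℂ) : Matrix (Fin 4) (Fin 4) ℂ :=
  !![0, s⁻¹, 0, 0; s, 0, 0, 0; 0, 0, 1, 0; 0, 0, 0, 1]

theorem swapMatrix_mul_self {s : ℂ} (hs : s ≠ 0) : swapMatrix s * swapMatrix s = 1 := by
  ext i j
  fin_cases i <;> fin_cases j <;> simp [swapMatrix, Matrix.mul_apply, Fin.sum_univ_four, hs]

theorem det_swapMatrix {s : ℂ} (hs : s ≠ 0) : (swapMatrix s).det = -1 := by
  simp [swapMatrix, Matrix.det_succ_row_zero, Fin.sum_univ_succ, Fin.succAbove, hs]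

theorem actM_swapMatrix (s : ℂ) (P : MvPolynomial (Fin 4) ℂ) :
    actM (swapMatrix s) P = aeval ![C s⁻¹ * X 1, C s * X 0, X 2, X 3] P := by
  rw [actM]
  congr 2
  funext j
  fin_cases j <;> simp [swapMatrix, Fin.sum_univ_four]

theorem actM_swapMatrix_lunaFamily {a b : Fin 3 → ℂ} {s : ℂ} (hs : s ≠ 0)
    (ha : a 1 * s ^ 3 = a 0) (hb : b 1 * s ^ 2 = b 0) :
    actM (swapMatrix s) (lunaFamily a b) = lunaFamily a b := by
  have hC {x y : ℂ} (h : x = y) : (C x : MvPolynomial (Fin 4) ℂ) = C y := congrArg C h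
  have ha' := hC (show a 0 * s⁻¹ ^ 3 = a 1 by rw [← ha]; field_simp)
  have hb' := hC (show b 0 * s⁻¹ ^ 2 = b 1 by rw [← hb]; field_simp)
  have hs' := hC (inv_mul_cancel₀ hs)
  have hCa := hC ha
  have hCb := hC hb
  simp only [map_mul, map_pow, map_one] at hCa hCb ha' hb' hs'
  simp only [actM_swapMatrix, lunaFamily, map_add, map_mul, map_pow, aeval_C, aeval_X,
    algebraMap_eq, Matrix.cons_val_zero, Matrix.cons_val_one, Matrix.cons_val_two,
    Matrix.cons_val_three, Matrix.head_cons, Matrix.tail_cons]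
  linear_combination X 0 ^ 3 * hCa + X 1 ^ 3 * ha' + X 0 ^ 2 * X 3 * hCb + X 1 ^ 2 * X 3 * hb' +
    X 0 * X 1 * X 2 * hs'

theorem smul_swapMatrix_ne_smul_one {c : ℂ} (hc : c ≠ 0) (s : ℂ) :
    ¬∃ t : ℂ, c • swapMatrix s = t • (1 : Matrix (Fin 4) (Fin 4) ℂ) := by
  rintro ⟨t, ht⟩
  have h00 : (0 : ℂ) = t := by simpa [swapMatrix] using congrFun (congrFun ht 0) 0
  have h22 : c = t := by simpa [swapMatrix] using congrFun (congrFun ht 2) 2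
  exact hc (h22.trans h00.symm)

theorem exists_mul_cube_eq_and_mul_sq_eq {K : Type*} [Field K] {p₀ p₁ q₀ q₁ : K}
    (hp₀ : p₀ ≠ 0) (hp₁ : p₁ ≠ 0) (hq₀ : q₀ ≠ 0) (hq₁ : q₁ ≠ 0)
    (hrel : p₁ ^ 2 * q₀ ^ 3 = p₀ ^ 2 * q₁ ^ 3) :
    ∃ s : K, s ≠ 0 ∧ p₁ * s ^ 3 = p₀ ∧ q₁ * s ^ 2 = q₀ := by
  refine ⟨p₀ * q₁ / (p₁ * q₀), by positivity, ?_, ?_⟩ <;>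
    · field_simp
      linear_combination -hrel

/-- Every point of the quintic hypersurface a₁²b₀³ = a₀²b₁³ in the Luna slice with
a₀, a₁, b₀, b₁ nonzero parameterizes a cubic surface with an extra automorphism of
order 2: there is a non-scalar A ∈ SL(4,ℂ) with A² scalar stabilizing G_α up to a
scalar. -/
theorem eckardt_divisor_in_luna_slice (a b : Fin 3 → ℂ)
    (ha0 : a 0 ≠ 0) (ha1 : a 1 ≠ 0) (hb0 : b 0 ≠ 0) (hb1 : b 1 ≠ 0)
    (hrel : (a 1) ^ 2 * (b 0) ^ 3 = (a 0) ^ 2 * (b 1) ^ 3) :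
    ∃ A : Matrix.SpecialLinearGroup (Fin 4) ℂ,
      (¬∃ t : ℂ, (A : Matrix (Fin 4) (Fin 4) ℂ) = t • (1 : Matrix (Fin 4) (Fin 4) ℂ)) ∧
      (∃ t : ℂ, (A : Matrix (Fin 4) (Fin 4) ℂ) * (A : Matrix (Fin 4) (Fin 4) ℂ) =
        t • (1 : Matrix (Fin 4) (Fin 4) ℂ)) ∧
      (∃ d : ℂ, actM (A : Matrix (Fin 4) (Fin 4) ℂ) (lunaFamily a b) =
        d • lunaFamily a b) := by
  obtain ⟨s, hs, ha, hb⟩ := exists_mul_cube_eq_and_mul_sq_eq ha0 ha1 hb0 hb1 hrel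
  obtain ⟨ν, hν⟩ := IsAlgClosed.exists_pow_nat_eq (-1 : ℂ) four_pos
  have hν0 : ν ≠ 0 := by rintro rfl; norm_num at hν
  have hdet : (ν • swapMatrix s).det = 1 := by
    rw [Matrix.det_smul, det_swapMatrix hs, Fintype.card_fin, hν]
    norm_num
  refine ⟨⟨ν • swapMatrix s, hdet⟩, smul_swapMatrix_ne_smul_one hν0 s, ⟨ν ^ 2, ?_⟩, ⟨ν ^ 3, ?_⟩⟩
  · rw [Matrix.SpecialLinearGroup.coe_mk, smul_mul_smul_comm, swapMatrix_mul_self hs, sq]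
  · rw [Matrix.SpecialLinearGroup.coe_mk, actM_smul (lunaFamily_isHomogeneous a b),
      actM_swapMatrix_lunaFamily hs ha hb]
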